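/- arXiv:2510.24206 — 2 statements merged into one kernel-verified Lean document; each statement's English description precedes it below -/
import Mathlib

section
/- If P B Q for some bisimulation B up to bisimilarity on a 3-valued transition system, then P ⊑_B Q. -/
/-- A 3-valued transition system. -/
structure TTS (S A : Type) where
  CT : S → A → S → Prop
  PT : S → A → S → Prop
  ct_sub_pt : ∀ p a q, CT p a q → PT p a q

def IsBisim {S A : Type} (T : TTS S A) (B : S → S → Prop) : Prop :=
  ∀ p q, B p q →
    (∀ a p', T.CT p a p' → ∃ q', T.CT q a q' ∧ B p' q') ∧
    (∀ a q', T.PT q a q' → ∃ p', T.PT p a p' ∧ B p' q')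

/-- the bisimulation preorder -/
def refB {S A : Type} (T : TTS S A) (p q : S) : Prop := ∃ B, IsBisim T B ∧ B p q

/-- the composition ⊑_B ∘ B ∘ ⊑_B -/
def UpToComp {S A : Type} (T : TTS S A) (B : S → S → Prop) (r s : S) : Prop :=
  ∃ r' s', refB T r r' ∧ B r' s' ∧ refB T s' s

/-- a bisimulation up to bisimilarity -/
def IsBisimUpTo {S A : Type} (T : TTS S A) (B : S → S → Prop) : Prop :=
  ∀ p q, B p q →
    (∀ a p', T.CT p a p' → ∃ q', T.CT q a q' ∧ UpToComp T B p' q') ∧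
    (∀ a q', T.PT q a q' → ∃ p', T.PT p a p' ∧ UpToComp T B p' q')


theorem refB_refl {S A : Type} (T : TTS S A) (p : S) : refB T p p :=
  ⟨Eq, fun a b hab => by subst hab; exact ⟨fun a p' h => ⟨p', h, rfl⟩, fun a q' h => ⟨q', h, rfl⟩⟩, rfl⟩

theorem refB_trans {S A : Type} (T : TTS S A) {p q r : S}
    (h1 : refB T p q) (h2 : refB T q r) : refB T p r := by
  obtain ⟨B1, hB1, hpq⟩ := h1
  obtain ⟨B2, hB2, hqr⟩ := h2
  refine ⟨fun x z => ∃ y, B1 x y ∧ B2 y z, ?_, q, hpq, hqr⟩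
  rintro x z ⟨y, hxy, hyz⟩
  constructor
  · intro a x' hx
    obtain ⟨y', hy, hxy'⟩ := (hB1 x y hxy).1 a x' hx
    obtain ⟨z', hz, hyz'⟩ := (hB2 y z hyz).1 a y' hy
    exact ⟨z', hz, y', hxy', hyz'⟩
  · intro a z' hz
    obtain ⟨y', hy, hyz'⟩ := (hB2 y z hyz).2 a z' hz
    obtain ⟨x', hx, hxy'⟩ := (hB1 x y hxy).2 a y' hy
    exact ⟨x', hx, y', hxy', hyz'⟩

theorem refB_isBisim {S A : Type} (T : TTS S A) : IsBisim T (refB T) := by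
  rintro p q ⟨B, hB, hpq⟩
  constructor
  · intro a p' hp
    obtain ⟨q', hq, h'⟩ := (hB p q hpq).1 a p' hp
    exact ⟨q', hq, B, hB, h'⟩
  · intro a q' hq
    obtain ⟨p', hp, h'⟩ := (hB p q hpq).2 a q' hq
    exact ⟨p', hp, B, hB, h'⟩

/-- if P B Q for a bisimulation B up to bisimilarity then P ⊑_B Q. -/
theorem bisim_upto_sound {S A : Type} (T : TTS S A) (B : S → S → Prop)
    (hB : IsBisimUpTo T B) (p q : S) (h : B p q) : refB T p q := by
  refine ⟨UpToComp T B, ?_, p, q, refB_refl T p, h, refB_refl T q⟩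
  rintro r s ⟨r', s', hrr', hB', hs's⟩
  constructor
  · intro a r1 hr
    obtain ⟨r1', hr', hsim1⟩ := (refB_isBisim T r r' hrr').1 a r1 hr
    obtain ⟨s1', hs', ⟨u, u', hu1, hu2, hu3⟩⟩ := (hB r' s' hB').1 a r1' hr'
    obtain ⟨s1, hs, hsim2⟩ := (refB_isBisim T s' s hs's).1 a s1' hs'
    exact ⟨s1, hs, u, u', refB_trans T hsim1 hu1, hu2, refB_trans T hu3 hsim2⟩
  · intro a s1 hs
    obtain ⟨s1', hs', hsim2⟩ := (refB_isBisim T s' s hs's).2 a s1 hs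
    obtain ⟨r1', hr', ⟨u, u', hu1, hu2, hu3⟩⟩ := (hB r' s' hB').2 a s1' hs'
    obtain ⟨r1, hr, hsim1⟩ := (refB_isBisim T r r' hrr').2 a r1' hr'
    exact ⟨r1, hr, u, u', refB_trans T hsim1 hu1, hu2, refB_trans T hu3 hsim2⟩
end

section
/- In the GSOS language with operators 0, a._ (a ∈ A), + and en_R (for R ⊆ A), the simulation preorder ⊑_S is not a precongruence for en_R: one has a.0 ⊑_S a.0 + b.0 but en_{b}(a.0) ⋢_S en_{b}(a.0 + b.0), for distinct actions a, b. -/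
/-- processes built from 0, prefixing a._, choice + and the operators en_R -/
inductive PTm (A : Type) where
  | zero : PTm A
  | pre : A → PTm A → PTm A
  | plus : PTm A → PTm A → PTm A
  | en : Set A → PTm A → PTm A

/-- The (2-valued) transition relation: a.x →a x; x →a x' implies x+y →a x' and
y →a y' implies x+y →a y'; x →a x' implies en_R(x) →a en_R(x'); and if x ↛a with
a ∈ R then en_R(x) →a en_R(x). -/
def Step {A : Type} : PTm A → A → PTm A → Prop
  | .zero, _, _ => False
  | .pre a p, b, q => b = a ∧ q = p
  | .plus p q, a, r => Step p a r ∨ Step q a r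
  | .en R p, a, q =>
      (∃ p', Step p a p' ∧ q = .en R p') ∨
      (a ∈ R ∧ (¬ ∃ p', Step p a p') ∧ q = .en R p)

/-- simulations -/
def IsSim {A : Type} (B : PTm A → PTm A → Prop) : Prop :=
  ∀ p q, B p q → ∀ a p', Step p a p' → ∃ q', Step q a q' ∧ B p' q'

/-- the simulation preorder -/
def simLe {A : Type} (p q : PTm A) : Prop := ∃ B, IsSim B ∧ B p q

/-- a.0 ⊑_S a.0 + b.0 but en_{b}(a.0) ⋢_S en_{b}(a.0 + b.0), so the
simulation preorder is not a precongruence for en_R. -/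
theorem simulation_not_precongruence_for_en {A : Type} (a b : A) (hab : a ≠ b) :
    simLe (PTm.pre a .zero) (PTm.plus (PTm.pre a .zero) (PTm.pre b .zero)) ∧
    ¬ simLe (PTm.en {b} (PTm.pre a .zero))
        (PTm.en {b} (PTm.plus (PTm.pre a .zero) (PTm.pre b .zero))) := by
  constructor
  · refine ⟨fun p q => (p = .pre a .zero ∧ q = .plus (.pre a .zero) (.pre b .zero)) ∨ p = .zero,
      ?_, Or.inl ⟨rfl, rfl⟩⟩
    rintro p q (⟨rfl, rfl⟩ | rfl) c p' hs
    · obtain ⟨rfl, rfl⟩ := hs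
      exact ⟨.zero, Or.inl ⟨rfl, rfl⟩, Or.inr rfl⟩
    · exact absurd hs id
  · rintro ⟨B, hB, hpq⟩
    -- en_{b}(a.0) →b en_{b}(a.0)
    have h1 : Step (PTm.en {b} (PTm.pre a PTm.zero)) b (PTm.en {b} (PTm.pre a PTm.zero)) :=
      Or.inr ⟨rfl, fun ⟨p', h⟩ => hab h.1.symm, rfl⟩
    obtain ⟨q', hq', hBq⟩ := hB _ _ hpq b _ h1
    -- analyze q'
    have hq'eq : q' = PTm.en {b} PTm.zero := by
      rcases hq' with ⟨p', hp', rfl⟩ | ⟨_, hne, _⟩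
      · rcases hp' with ⟨h, rfl⟩ | ⟨h, rfl⟩
        · exact absurd h.symm hab
        · rfl
      · exact absurd ⟨PTm.zero, Or.inr ⟨rfl, rfl⟩⟩ hne
    subst hq'eq
    -- en_{b}(a.0) →a en_{b}(0)
    have h2 : Step (PTm.en {b} (PTm.pre a PTm.zero)) a (PTm.en {b} PTm.zero) :=
      Or.inl ⟨PTm.zero, ⟨rfl, rfl⟩, rfl⟩
    obtain ⟨q'', hq'', _⟩ := hB _ _ hBq a _ h2
    rcases hq'' with ⟨p', hp', _⟩ | ⟨hmem, _, _⟩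
    · exact hp'
    · exact hab (Set.eq_of_mem_singleton hmem)
end
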